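/- arXiv:2412.04926 — 3 statements merged into one kernel-verified Lean document; each statement's English description precedes it below -/
import Mathlib

section
/- For every α > 1/2, the Weierstrass function W(t) = ∑_{n=1}^∞ cos(4ⁿ t)/2ⁿ is not in C^α(t₀) for any t₀ ∈ ℝ; i.e., for every t₀ and every constant C there exists arbitrarily small h > 0 with |W(t₀+h) − W(t₀)| > C h^α. -/
open Real

noncomputable def W (t : ℝ) : ℝ :=
  ∑' n : ℕ, Real.cos ((4 : ℝ) ^ (n + 1) * t) / 2 ^ (n + 1)

/-!
Compare two bounds for the second difference `W x - 2 W (x + s) + W (x + 2 s)` at the grid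
points `x = m s` of mesh `s = π / 4 ^ (N + 1)`. Termwise, the second difference of
`cos (λ ·)` is `2 cos (λ (x + s)) (cos (λ s) - 1)`. For `λ = 4 ^ k` with `k > N + 1` it vanishes,
since `λ s` is a multiple of `2 π`; for `k = N + 1` it is `± 4`, since `λ x` is a multiple of `π`
and `λ s = π`; for `k ≤ N` it is at most `(λ s) ^ 2`, and with the weights `2 ^ (-k)` these terms
add up to less than half of the `k = N + 1` term. So the second difference is at least
`2 ^ (-N) ≈ s ^ (1/2)`, whereas a Hölder bound of exponent `α` at `t₀ ∈ [x - s, x)` makes it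
`O(s ^ α)`.
-/

open Filter Topology

lemma cos_sub_two_mul_cos_add_add_cos (θ φ : ℝ) :
    cos θ - 2 * cos (θ + φ) + cos (θ + 2 * φ) = 2 * cos (θ + φ) * (cos φ - 1) := by
  simp only [cos_add, cos_two_mul, sin_two_mul]
  ring

lemma abs_two_mul_cos_mul_cos_sub_one_le (θ φ : ℝ) : |2 * cos θ * (cos φ - 1)| ≤ φ ^ 2 := by
  have hφ : |cos φ - 1| ≤ φ ^ 2 / 2 := by
    rw [abs_sub_comm, abs_of_nonneg (sub_nonneg.2 (cos_le_one φ))]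
    linarith [one_sub_sq_div_two_le_cos (x := φ)]
  calc |2 * cos θ * (cos φ - 1)| = 2 * |cos θ| * |cos φ - 1| := by
        rw [abs_mul, abs_mul, abs_two]
    _ ≤ 2 * 1 * (φ ^ 2 / 2) := by gcongr; exact abs_cos_le_one θ
    _ = φ ^ 2 := by ring

lemma cos_four_pow_mul_pi {k : ℕ} (hk : 0 < k) : cos (4 ^ k * π) = 1 := by
  obtain ⟨j, rfl⟩ := Nat.exists_eq_add_of_lt hk
  have : (4 : ℝ) ^ (0 + j + 1) * π = ((2 * 4 ^ j : ℕ) : ℝ) * (2 * π) := by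
    push_cast; ring
  rw [this, cos_nat_mul_two_pi]

lemma sum_range_eight_pow_succ_le (N : ℕ) :
    ∑ n ∈ Finset.range N, (8 : ℝ) ^ (n + 1) ≤ 8 ^ (N + 1) / 7 := by
  induction N with
  | zero => norm_num
  | succ N ih =>
    calc ∑ n ∈ Finset.range (N + 1), (8 : ℝ) ^ (n + 1)
        ≤ 8 ^ (N + 1) / 7 + 8 ^ (N + 1) := by rw [Finset.sum_range_succ]; gcongr
      _ = 8 ^ (N + 1 + 1) / 7 := by ring

lemma sq_four_pow_mul_div_two_pow (n : ℕ) (s : ℝ) :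
    (4 ^ n * s) ^ 2 / 2 ^ n = 8 ^ n * s ^ 2 := by
  rw [div_eq_iff (by positivity), mul_pow, ← pow_mul, mul_comm n 2, pow_mul, mul_right_comm,
    ← mul_pow]
  norm_num

lemma summable_cos_four_pow_mul_div_two_pow (t : ℝ) :
    Summable fun n : ℕ ↦ cos (4 ^ (n + 1) * t) / 2 ^ (n + 1) := by
  refine (summable_geometric_two.mul_left (1 / 2)).of_norm_bounded fun n ↦ ?_
  rw [norm_div, norm_pow, Real.norm_two, pow_succ, one_div_pow]
  calc ‖cos (4 ^ (n + 1) * t)‖ / (2 ^ n * 2) ≤ 1 / (2 ^ n * 2) := by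
        gcongr; exact abs_cos_le_one _
    _ = 1 / 2 * (1 / 2 ^ n) := by ring

noncomputable def secondDiffTerm (x s : ℝ) (n : ℕ) : ℝ :=
  2 * cos (4 ^ (n + 1) * x + 4 ^ (n + 1) * s) * (cos (4 ^ (n + 1) * s) - 1) / 2 ^ (n + 1)

lemma W_second_diff_eq_tsum (x s : ℝ) :
    W x - 2 * W (x + s) + W (x + 2 * s) = ∑' n, secondDiffTerm x s n := by
  have h₀ := summable_cos_four_pow_mul_div_two_pow x
  have h₁ := (summable_cos_four_pow_mul_div_two_pow (x + s)).mul_left 2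
  have h₂ := summable_cos_four_pow_mul_div_two_pow (x + 2 * s)
  rw [W, W, W, ← tsum_mul_left, ← h₀.tsum_sub h₁, ← (h₀.sub h₁).tsum_add h₂]
  congr 1 with n
  rw [secondDiffTerm, ← cos_sub_two_mul_cos_add_add_cos]
  ring_nf

lemma abs_secondDiffTerm_le (x s : ℝ) (n : ℕ) :
    |secondDiffTerm x s n| ≤ (4 ^ (n + 1) * s) ^ 2 / 2 ^ (n + 1) := by
  rw [secondDiffTerm, abs_div, abs_of_pos (by positivity : (0 : ℝ) < 2 ^ (n + 1))]
  exact div_le_div_of_nonneg_right (abs_two_mul_cos_mul_cos_sub_one_le _ _) (by positivity)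

section Grid

variable {N : ℕ} {s : ℝ}

lemma secondDiffTerm_eq_zero_of_lt (hs : 4 ^ (N + 1) * s = π) (x : ℝ) {n : ℕ} (hn : N < n) :
    secondDiffTerm x s n = 0 := by
  obtain ⟨k, rfl⟩ := Nat.exists_eq_add_of_lt hn
  have : (4 : ℝ) ^ (N + k + 1 + 1) * s = 4 ^ (k + 1) * π := by
    rw [← hs]; ring
  rw [secondDiffTerm, this, cos_four_pow_mul_pi k.succ_pos]
  ring

lemma abs_secondDiffTerm_self (hs : 4 ^ (N + 1) * s = π) (m : ℤ) :
    |secondDiffTerm (m * s) s N| = 4 / 2 ^ (N + 1) := by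
  have : (4 : ℝ) ^ (N + 1) * (m * s) + 4 ^ (N + 1) * s = (m + 1 : ℤ) * π := by
    push_cast; rw [← hs]; ring
  rw [secondDiffTerm, this, hs, cos_pi, abs_div, abs_mul, abs_mul, abs_cos_int_mul_pi,
    abs_of_pos (by positivity : (0 : ℝ) < 2 ^ (N + 1))]
  norm_num

lemma sum_abs_secondDiffTerm_le (hs : 4 ^ (N + 1) * s = π) (x : ℝ) :
    ∑ n ∈ Finset.range N, |secondDiffTerm x s n| ≤ 2 / 2 ^ (N + 1) := by
  have hπ : π ^ 2 ≤ 14 := by nlinarith [pi_lt_d2, pi_pos]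
  calc ∑ n ∈ Finset.range N, |secondDiffTerm x s n|
      ≤ ∑ n ∈ Finset.range N, (8 : ℝ) ^ (n + 1) * s ^ 2 := by
        gcongr with n
        exact (abs_secondDiffTerm_le x s n).trans_eq (sq_four_pow_mul_div_two_pow _ s)
    _ ≤ 8 ^ (N + 1) / 7 * s ^ 2 := by
        rw [← Finset.sum_mul]; gcongr; exact sum_range_eight_pow_succ_le N
    _ = π ^ 2 / 2 ^ (N + 1) / 7 := by
        rw [← hs, sq_four_pow_mul_div_two_pow]; ring
    _ ≤ 2 / 2 ^ (N + 1) := by rw [div_right_comm]; gcongr; linarith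

lemma one_div_two_pow_le_abs_W_second_diff (hs : 4 ^ (N + 1) * s = π) (m : ℤ) :
    1 / 2 ^ N ≤ |W (m * s) - 2 * W (m * s + s) + W (m * s + 2 * s)| := by
  set x : ℝ := m * s
  set low := ∑ n ∈ Finset.range N, secondDiffTerm x s n
  have hsplit : W x - 2 * W (x + s) + W (x + 2 * s) = secondDiffTerm x s N + low := by
    rw [W_second_diff_eq_tsum, add_comm, ← Finset.sum_range_succ]
    exact tsum_eq_sum fun n hn ↦ secondDiffTerm_eq_zero_of_lt hs x (by simpa using hn)
  have hlow : |low| ≤ 2 / 2 ^ (N + 1) :=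
    (Finset.abs_sum_le_sum_abs _ _).trans (sum_abs_secondDiffTerm_le hs x)
  calc 1 / 2 ^ N = 4 / 2 ^ (N + 1) - 2 / 2 ^ (N + 1) := by rw [pow_succ]; ring
    _ ≤ |secondDiffTerm x s N| - |low| := by rw [abs_secondDiffTerm_self hs m]; gcongr
    _ = |secondDiffTerm x s N| - |-low| := by rw [abs_neg]
    _ ≤ |secondDiffTerm x s N - -low| := abs_sub_abs_le_abs_sub _ _
    _ = |W x - 2 * W (x + s) + W (x + 2 * s)| := by rw [sub_neg_eq_add, hsplit]

end Grid

lemma abs_second_diff_le_of_forall_abs_sub_le {f : ℝ → ℝ} {t x s B : ℝ} (htx : t < x)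
    (hxs : x ≤ t + s) (hB : ∀ y, t < y → y ≤ t + 3 * s → |f y - f t| ≤ B) :
    |f x - 2 * f (x + s) + f (x + 2 * s)| ≤ 4 * B := by
  have h₀ := abs_le.1 (hB x htx (by linarith))
  have h₁ := abs_le.1 (hB (x + s) (by linarith) (by linarith))
  have h₂ := abs_le.1 (hB (x + 2 * s) (by linarith) (by linarith))
  rw [abs_le]
  constructor <;> linarith [h₀.1, h₀.2, h₁.1, h₁.2, h₂.1, h₂.2]

lemma tendsto_two_pow_mul_rpow_div_four_pow {α : ℝ} (hα : 1 / 2 < α) {c : ℝ} (hc : 0 ≤ c) :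
    Tendsto (fun N : ℕ ↦ 2 ^ N * (c / 4 ^ (N + 1)) ^ α) atTop (𝓝 0) := by
  have h4α : 2 < (4 : ℝ) ^ α := by
    calc (2 : ℝ) = 4 ^ (1 / 2 : ℝ) := by
          rw [show (4 : ℝ) = 2 ^ (2 : ℝ) by norm_num, ← rpow_mul zero_le_two]; norm_num
      _ < 4 ^ α := rpow_lt_rpow_of_exponent_lt (by norm_num) hα
  have hr : Tendsto (fun N : ℕ ↦ ((2 : ℝ) / 4 ^ α) ^ N) atTop (𝓝 0) :=
    tendsto_pow_atTop_nhds_zero_of_lt_one (by positivity) ((div_lt_one (by positivity)).2 h4α)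
  convert hr.const_mul (c ^ α / 4 ^ α) using 1
  · ext N
    rw [div_rpow hc (by positivity), ← rpow_pow_comm (by norm_num), div_pow, pow_succ]
    field_simp
  · simp

/-- For every `α > 1/2`, the Weierstrass function `W` is not in `C^α(t₀)` for any `t₀`:
for every `t₀`, every constant `C` and every `δ > 0` there is `0 < h < δ` with
`|W(t₀+h) − W(t₀)| > C h^α`. -/
theorem weierstrass_not_Calpha (α : ℝ) (hα : 1 / 2 < α) (t₀ : ℝ) (C : ℝ) (δ : ℝ) (hδ : 0 < δ) :
    ∃ h : ℝ, 0 < h ∧ h < δ ∧ C * h ^ α < |W (t₀ + h) - W t₀| := by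
  by_contra! hW
  have hC : 0 ≤ C := by
    have := (abs_nonneg _).trans (hW (δ / 2) (by positivity) (by linarith))
    exact nonneg_of_mul_nonneg_left this (by positivity)
  have hmesh : Tendsto (fun N : ℕ ↦ 3 * π / 4 ^ (N + 1)) atTop (𝓝 0) :=
    tendsto_const_nhds.div_atTop
      ((tendsto_pow_atTop_atTop_of_one_lt (by norm_num)).comp (tendsto_add_atTop_nat 1))
  obtain ⟨N, hNδ, hNC⟩ := ((hmesh.eventually (gt_mem_nhds hδ)).and
    (((tendsto_two_pow_mul_rpow_div_four_pow hα (c := 3 * π) (by positivity)).const_mul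
      (4 * C)).eventually (gt_mem_nhds (by norm_num : (4 * C * 0 : ℝ) < 1)))).exists
  rw [mul_div_assoc] at hNδ hNC
  set s := π / 4 ^ (N + 1) with hs_def
  have hs : 4 ^ (N + 1) * s = π := by rw [hs_def]; field_simp
  obtain ⟨m, ⟨hm, hm'⟩, -⟩ := existsUnique_add_zsmul_mem_Ioc (by positivity : 0 < s) 0 t₀
  rw [zero_add, zsmul_eq_mul] at hm hm'
  have hB : ∀ y, t₀ < y → y ≤ t₀ + 3 * s → |W y - W t₀| ≤ C * (3 * s) ^ α := fun y hy hy' ↦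
    calc |W y - W t₀| = |W (t₀ + (y - t₀)) - W t₀| := by rw [add_sub_cancel]
      _ ≤ C * (y - t₀) ^ α := hW _ (by linarith) (by linarith)
      _ ≤ C * (3 * s) ^ α := by gcongr; linarith
  have hupper := abs_second_diff_le_of_forall_abs_sub_le hm hm' hB
  have hlower := one_div_two_pow_le_abs_W_second_diff hs m
  rw [div_le_iff₀ (by positivity)] at hlower
  nlinarith [pow_pos (two_pos : (0 : ℝ) < 2) N]
end

section
/- The Weierstrass function W(t) = ∑_{n=1}^∞ cos(4ⁿ t)/2ⁿ satisfies the uniform Hölder estimate |W(t+h) − W(t)| ≤ C |h|^{1/2} for all t ∈ ℝ and |h| ≤ 1, for some absolute constant C. -/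
open Real

/-!
Write `W(t + h) - W(t) = ∑ₙ (cos (4ⁿ⁺¹ (t + h)) - cos (4ⁿ⁺¹ t)) / 2ⁿ⁺¹`. Since `cos` is
1-Lipschitz and bounded by `1`, the `n`-th term is at most `min (2ⁿ⁺¹ |h|) (2 / 2ⁿ⁺¹)`.
Splitting the sum at the index `k` with `2ᵏ ≈ |h|^{-1/2}`, the low frequencies contribute
a geometric sum `≤ 2ᵏ⁺¹ |h|` and the high ones a geometric tail `≤ 2 / 2ᵏ`, both `O(√|h|)`.
-/

lemma summable_cos_pow_four_div_pow_two (t : ℝ) :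
    Summable fun n : ℕ => cos ((4 : ℝ) ^ (n + 1) * t) / 2 ^ (n + 1) := by
  refine Summable.of_norm_bounded (summable_geometric_two' 1) fun n => ?_
  rw [norm_div, norm_pow, Real.norm_two, div_div, ← pow_succ']
  gcongr
  exact (Real.norm_eq_abs _).trans_le (abs_cos_le_one _)

lemma abs_cos_sub_cos_le_min (x y : ℝ) : |cos x - cos y| ≤ min |x - y| 2 :=
  le_min (Real.abs_cos_sub_cos_le x y) <|
    (abs_sub _ _).trans <| by linarith [abs_cos_le_one x, abs_cos_le_one y]

lemma abs_cos_sq_mul_div_sub_le {b : ℝ} (hb : 0 < b) (x y : ℝ) :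
    |cos (b ^ 2 * x) / b - cos (b ^ 2 * y) / b| ≤ min (b * |x - y|) (2 / b) := by
  have hlip : b * |x - y| = |b ^ 2 * x - b ^ 2 * y| / b := by
    rw [← mul_sub, abs_mul, abs_of_pos (by positivity : 0 < b ^ 2)]
    field_simp
  rw [hlip, min_div_div_right hb.le, div_sub_div_same, abs_div, abs_of_pos hb]
  gcongr
  exact abs_cos_sub_cos_le_min _ _

lemma summable_min_two_pow {a : ℝ} (ha : 0 ≤ a) :
    Summable fun n : ℕ => min (2 ^ (n + 1) * a) (2 / 2 ^ (n + 1)) :=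
  .of_nonneg_of_le (fun n => by positivity) (fun n => min_le_right _ _)
    ((summable_geometric_two' 2).congr fun n => by ring)

lemma abs_W_add_sub_le (t h : ℝ) :
    |W (t + h) - W t| ≤ ∑' n : ℕ, min (2 ^ (n + 1) * |h|) (2 / 2 ^ (n + 1)) := by
  rw [W, W, ← (summable_cos_pow_four_div_pow_two _).tsum_sub
    (summable_cos_pow_four_div_pow_two _), ← Real.norm_eq_abs]
  refine tsum_of_norm_bounded (summable_min_two_pow (abs_nonneg h)).hasSum fun n => ?_
  have h4 : (4 : ℝ) ^ (n + 1) = (2 ^ (n + 1)) ^ 2 := by rw [← pow_mul, mul_comm, pow_mul]; norm_num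
  simpa only [h4, add_sub_cancel_left, Real.norm_eq_abs] using
    abs_cos_sq_mul_div_sub_le (by positivity : (0 : ℝ) < 2 ^ (n + 1)) (t + h) t

lemma sum_range_two_pow_succ (k : ℕ) :
    ∑ i ∈ Finset.range k, (2 : ℝ) ^ (i + 1) = 2 ^ (k + 1) - 2 := by
  induction k with
  | zero => simp
  | succ k ih => rw [Finset.sum_range_succ, ih]; ring

lemma tsum_min_two_pow_le {a : ℝ} (ha : 0 ≤ a) (k : ℕ) :
    ∑' n : ℕ, min (2 ^ (n + 1) * a) (2 / 2 ^ (n + 1)) ≤ 2 ^ (k + 1) * a + 2 / 2 ^ k := by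
  have hsum := summable_min_two_pow ha
  rw [← hsum.sum_add_tsum_nat_add k]
  gcongr ?_ + ?_
  · calc ∑ i ∈ Finset.range k, min (2 ^ (i + 1) * a) (2 / 2 ^ (i + 1))
        ≤ ∑ i ∈ Finset.range k, 2 ^ (i + 1) * a :=
          Finset.sum_le_sum fun i _ => min_le_left _ _
      _ = (2 ^ (k + 1) - 2) * a := by rw [← Finset.sum_mul, sum_range_two_pow_succ]
      _ ≤ 2 ^ (k + 1) * a := by nlinarith
  · calc ∑' n : ℕ, min (2 ^ (n + k + 1) * a) (2 / 2 ^ (n + k + 1))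
        ≤ ∑' n : ℕ, 2 / 2 ^ k / 2 / 2 ^ n :=
          (hsum.comp_injective (add_left_injective k)).tsum_le_tsum
            (fun n => (min_le_right _ _).trans_eq (by rw [pow_add, pow_add]; ring))
            (summable_geometric_two' _)
      _ = 2 / 2 ^ k := tsum_geometric_two' _

lemma tsum_min_two_pow_le_six_sqrt {a : ℝ} (ha₀ : 0 ≤ a) (ha₁ : a ≤ 1) :
    ∑' n : ℕ, min (2 ^ (n + 1) * a) (2 / 2 ^ (n + 1)) ≤ 6 * √a := by
  rcases ha₀.eq_or_lt with rfl | ha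
  · simp [fun n : ℕ => (by positivity : (0 : ℝ) ≤ 2 / 2 ^ (n + 1))]
  have hs : 0 < √a := sqrt_pos.2 ha
  obtain ⟨n, hn₁, hn₂⟩ := exists_nat_pow_near (one_le_one_div hs (sqrt_le_one.2 ha₁)) one_lt_two
  have hlow : 2 ^ n * √a ≤ 1 := (le_div_iff₀ hs).1 hn₁
  have hhigh : 1 < 2 ^ (n + 1) * √a := (div_lt_iff₀ hs).1 hn₂
  have hhead : 2 ^ (n + 1 + 1) * a ≤ 4 * √a :=
    calc 2 ^ (n + 1 + 1) * a = 4 * (2 ^ n * √a) * √a := by nth_rw 1 [← mul_self_sqrt ha₀]; ring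
      _ ≤ 4 * 1 * √a := by gcongr
      _ = 4 * √a := by ring
  have htail : 2 / 2 ^ (n + 1) < 2 * √a := by rw [div_lt_iff₀ (by positivity)]; linarith
  linarith [tsum_min_two_pow_le ha₀ (n + 1)]

/-- The Weierstrass function satisfies the uniform Hölder estimate
`|W(t+h) − W(t)| ≤ C |h|^{1/2}` for all `t` and `|h| ≤ 1`. -/
theorem weierstrass_uniform_half_holder :
    ∃ C : ℝ, ∀ t h : ℝ, |h| ≤ 1 → |W (t + h) - W t| ≤ C * |h| ^ (1 / 2 : ℝ) := by
  refine ⟨6, fun t h hh => ?_⟩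
  rw [← Real.sqrt_eq_rpow]
  exact (abs_W_add_sub_le t h).trans (tsum_min_two_pow_le_six_sqrt (abs_nonneg h) hh)
end

section
/- For ν > 2, the set A_ν = {t ∈ [0,1] : |t − p/q| ≤ q^{−ν} for infinitely many coprime pairs (p,q)} satisfies H^{2/μ}(A_ν) = 0 whenever μ < ν, where H^s denotes s-Hausdorff measure. -/
/-!
Every `t ∈ A_ν` lies in infinitely many of the sets
`I_{p,q} = [0,1] ∩ [p/q - q^{-ν}, p/q + q^{-ν}]`. For fixed `q` at most `3q + 1` of them are
nonempty, so with `d = 2/μ` we get `∑ diam(I_{p,q})^d ≤ ∑_q (3q + 1) (2q^{-ν})^d < ∞`, because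
`νd > 2` exactly when `μ < ν`. By the Hausdorff–Cantelli lemma (cover the points lying in
infinitely many `I_{p,q}` by the tails of the family, whose `d`-sums tend to `0`), `H^d(A_ν) = 0`.
-/

open MeasureTheory

/-- `A_ν`: the set of `t ∈ [0,1]` admitting infinitely many coprime approximations
within `q^{−ν}`. -/
def Aset (ν : ℝ) : Set ℝ :=
  {t : ℝ | t ∈ Set.Icc (0 : ℝ) 1 ∧
    {pq : ℤ × ℕ | 0 < pq.2 ∧ IsCoprime pq.1 (pq.2 : ℤ) ∧
      |t - (pq.1 : ℝ) / (pq.2 : ℝ)| ≤ (pq.2 : ℝ) ^ (-ν)}.Infinite}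

open Filter Metric Set
open scoped ENNReal Topology

/-- The Hausdorff–Cantelli lemma. -/
theorem hausdorffMeasure_setOf_infinite_mem_eq_zero {X ι : Type*} [EMetricSpace X]
    [MeasurableSpace X] [BorelSpace X] [Countable ι] {d : ℝ} (hd : 0 < d) (E : ι → Set X)
    (hE : ∑' i, ediam (E i) ^ d ≠ ∞) : μH[d] {x | {i | x ∈ E i}.Infinite} = 0 := by
  classical
  set tail : Finset ι → ℝ≥0∞ := fun F => ∑' i : {i // i ∉ F}, ediam (E i) ^ d
  have htail : Tendsto tail atTop (𝓝 0) := ENNReal.tendsto_tsum_compl_atTop_zero hE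
  have hradius : Tendsto (fun F => tail F ^ d⁻¹) atTop (𝓝 0) := by
    have := ((ENNReal.continuous_rpow_const (y := d⁻¹)).tendsto 0).comp htail
    rwa [ENNReal.zero_rpow_of_pos (inv_pos.2 hd)] at this
  have hdiam : ∀ F, ∀ i : {i // i ∉ F}, ediam (E i) ≤ tail F ^ d⁻¹ := fun F i =>
    calc ediam (E i) = (ediam (E i) ^ d) ^ d⁻¹ := by
          rw [← ENNReal.rpow_mul, mul_inv_cancel₀ hd.ne', ENNReal.rpow_one]
      _ ≤ tail F ^ d⁻¹ := ENNReal.rpow_le_rpow (ENNReal.le_tsum i) (inv_nonneg.2 hd.le)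
  have hcover (F : Finset ι) : {x | {i | x ∈ E i}.Infinite} ⊆ ⋃ i : {i // i ∉ F}, E i := by
    intro x hx
    obtain ⟨i, hi, hiF⟩ := (hx.sdiff F.finite_toSet).nonempty
    exact mem_iUnion.2 ⟨⟨i, hiF⟩, hi⟩
  refine nonpos_iff_eq_zero.1 ?_
  calc μH[d] {x | {i | x ∈ E i}.Infinite}
      ≤ liminf tail atTop :=
        Measure.hausdorffMeasure_le_liminf_tsum d _ _ hradius (fun F (i : {i // i ∉ F}) => E i)
          (Eventually.of_forall hdiam) (Eventually.of_forall hcover)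
    _ = 0 := htail.liminf_eq

def approxInterval (ν : ℝ) (pq : ℤ × ℕ) : Set ℝ :=
  {t ∈ Icc (0 : ℝ) 1 | 0 < pq.2 ∧ |t - pq.1 / pq.2| ≤ (pq.2 : ℝ) ^ (-ν)}

lemma Aset_subset_setOf_infinite_mem_approxInterval (ν : ℝ) :
    Aset ν ⊆ {t | {pq | t ∈ approxInterval ν pq}.Infinite} :=
  fun _ ⟨ht, happrox⟩ => happrox.mono fun _ h => ⟨ht, h.1, h.2.2⟩

lemma ediam_approxInterval_le (ν : ℝ) (pq : ℤ × ℕ) :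
    ediam (approxInterval ν pq) ≤ ENNReal.ofReal (2 * (pq.2 : ℝ) ^ (-ν)) := by
  set c : ℝ := pq.1 / pq.2
  set r : ℝ := (pq.2 : ℝ) ^ (-ν)
  have hsub : approxInterval ν pq ⊆ Icc (c - r) (c + r) := fun _ ⟨_, _, hclose⟩ =>
    ⟨by linarith [(abs_le.1 hclose).1], by linarith [(abs_le.1 hclose).2]⟩
  calc ediam (approxInterval ν pq) ≤ ediam (Icc (c - r) (c + r)) := ediam_mono hsub
    _ = ENNReal.ofReal (2 * r) := by rw [Real.ediam_Icc]; ring_nf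

lemma approxInterval_eq_empty {ν : ℝ} (hν : 0 ≤ ν) {p : ℤ} {q : ℕ}
    (hp : p ∉ Finset.Icc (-q : ℤ) (2 * q)) : approxInterval ν (p, q) = ∅ := by
  refine eq_empty_of_forall_notMem fun t ⟨⟨ht0, ht1⟩, hq, hclose⟩ => hp ?_
  have hq0 : (0 : ℝ) < q := by exact_mod_cast hq
  have hr : (q : ℝ) ^ (-ν) ≤ 1 :=
    Real.rpow_le_one_of_one_le_of_nonpos (by exact_mod_cast hq) (by linarith)
  obtain ⟨hlow, hhigh⟩ := abs_le.1 (hclose.trans hr)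
  have hlow' : -(q : ℝ) ≤ p := by
    have : (-1 : ℝ) ≤ p / q := by linarith
    rwa [le_div_iff₀ hq0, neg_one_mul] at this
  have hhigh' : (p : ℝ) ≤ 2 * q := by
    have : (p : ℝ) / q ≤ 2 := by linarith
    rwa [div_le_iff₀ hq0] at this
  rw [Finset.mem_Icc]
  constructor <;> [exact_mod_cast hlow'; exact_mod_cast hhigh']

lemma tsum_ediam_approxInterval_rpow_le {ν d : ℝ} (hν : 0 ≤ ν) (hd : 0 < d) (q : ℕ) :
    ∑' p : ℤ, ediam (approxInterval ν (p, q)) ^ d ≤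
      ENNReal.ofReal ((3 * q + 1) * (2 * (q : ℝ) ^ (-ν)) ^ d) := by
  have hvanish : ∀ p ∉ Finset.Icc (-q : ℤ) (2 * q),
      ediam (approxInterval ν (p, q)) ^ d = 0 := fun p hp => by
    rw [approxInterval_eq_empty hν hp, ediam_empty, ENNReal.zero_rpow_of_pos hd]
  have hcard : (Finset.Icc (-q : ℤ) (2 * q)).card = 3 * q + 1 := by
    rw [Int.card_Icc]; omega
  rw [tsum_eq_sum hvanish, ENNReal.ofReal_mul (by positivity),
    ← ENNReal.ofReal_rpow_of_nonneg (by positivity) hd.le]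
  calc ∑ p ∈ Finset.Icc (-q : ℤ) (2 * q), ediam (approxInterval ν (p, q)) ^ d
      ≤ ∑ _p ∈ Finset.Icc (-q : ℤ) (2 * q), ENNReal.ofReal (2 * (q : ℝ) ^ (-ν)) ^ d :=
        Finset.sum_le_sum fun p _ =>
          ENNReal.rpow_le_rpow (ediam_approxInterval_le ν (p, q)) hd.le
    _ = ENNReal.ofReal (3 * q + 1) * ENNReal.ofReal (2 * (q : ℝ) ^ (-ν)) ^ d := by
        rw [Finset.sum_const, hcard, nsmul_eq_mul]
        norm_cast

lemma summable_three_mul_add_one_mul_rpow {ν d : ℝ} (hνd : 2 < ν * d) :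
    Summable fun q : ℕ => (3 * q + 1) * (2 * (q : ℝ) ^ (-ν)) ^ d := by
  have hsplit : ∀ q : ℕ, (3 * q + 1) * (2 * (q : ℝ) ^ (-ν)) ^ d =
      2 ^ d * (3 * (q : ℝ) ^ (1 - ν * d) + (q : ℝ) ^ (-(ν * d))) := fun q => by
    have hq := Nat.cast_nonneg (α := ℝ) q
    rw [Real.mul_rpow zero_le_two (Real.rpow_nonneg hq _), ← Real.rpow_mul hq, sub_eq_add_neg,
      Real.rpow_add' hq (by linarith), Real.rpow_one, neg_mul]
    ring
  simp_rw [hsplit]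
  exact (((Real.summable_nat_rpow.2 (by linarith)).mul_left 3).add
    (Real.summable_nat_rpow.2 (by linarith))).mul_left _

theorem hausdorff_measure_Aset_eq_zero_general (ν μ : ℝ) (hμ : 0 < μ) (hμν : μ < ν) :
    μH[(2 / μ : ℝ)] (Aset ν) = 0 := by
  have hν : 0 ≤ ν := (hμ.trans hμν).le
  have hd : 0 < 2 / μ := by positivity
  have hνd : 2 < ν * (2 / μ) := by
    rw [mul_div_assoc', lt_div_iff₀ hμ]
    linarith
  refine measure_mono_null (Aset_subset_setOf_infinite_mem_approxInterval ν)
    (hausdorffMeasure_setOf_infinite_mem_eq_zero hd _ ?_)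
  rw [ENNReal.tsum_prod', ENNReal.tsum_comm]
  refine ne_top_of_le_ne_top ?_
    (ENNReal.tsum_le_tsum fun q => tsum_ediam_approxInterval_rpow_le hν hd q)
  rw [← ENNReal.ofReal_tsum_of_nonneg (fun q => by positivity)
    (summable_three_mul_add_one_mul_rpow hνd)]
  exact ENNReal.ofReal_ne_top

/-- Covering half of the Jarník–Besicovitch theorem: for `ν > 2` and `0 < μ < ν`,
`H^{2/μ}(A_ν) = 0`. -/
theorem hausdorff_measure_Aset_eq_zero (ν μ : ℝ) (hν : 2 < ν) (hμ : 0 < μ) (hμν : μ < ν) :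
    μH[(2 / μ : ℝ)] (Aset ν) = 0 :=
  hausdorff_measure_Aset_eq_zero_general ν μ hμ hμν
end
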